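/- arXiv:1504.00624 — 2 statements merged into one kernel-verified Lean document; each statement's English description precedes it below -/
import Mathlib

section
/- Let X be a finite set of random variables on a finite probability space with strictly positive joint distribution P, let G be a graph on X, and suppose P is a Markov Network with respect to G (i.e., for every variable X_i, P(X_i | all other variables) = P(X_i | X_{N(i)}), where N(i) denotes the neighbors of i in G). Then for any partition X = (X1, X2), P is a Partitioned Markov Network with respect to G, i.e., for every X_i in X1, P(X_i | X1 ∪ X_{N(i)} \ X_i) = P(X_i | all other variables), and symmetrically for every X_i in X2. -/
/-!
Summing the local Markov property `P(x) = P(x_i | x_{N(i)}) · P(x_{∖i})` over all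
configurations that agree with `x` on `{i} ∪ S` gives
`P(x_{{i} ∪ S}) = P(x_i | x_{N(i)}) · P(x_S)` whenever `N(i) ⊆ S ∌ i`, because the factor
`P(x_i | x_{N(i)})` is constant on that set and the marginals `P(y_{∖i})` add up to `P(x_S)`.
Hence `P(x_i | x_S) = P(x_i | x_{N(i)}) = P(x_i | x_{∖i})` for every such `S`, in particular for
`S = (X_k ∪ N(i)) ∖ {i}`.
-/

open Finset

variable {ι V : Type*}

/-- The (unnormalized) probability that the variables in `A` take the values
prescribed by `x`, i.e. the marginal probability `P(X_A = x_A)`. -/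
noncomputable def margin [Fintype ι] [Fintype V] [DecidableEq ι] [DecidableEq V]
    (P : (ι → V) → ℝ) (A : Finset ι) (x : ι → V) : ℝ :=
  ∑ y ∈ Finset.univ.filter (fun y : ι → V => ∀ i ∈ A, y i = x i), P y

/-- `P` is a Markov network w.r.t. `G`: for every variable `i` and configuration `x`,
`P(X_i = x i | X_{N(i)} = x_{N(i)}) = P(X_i = x i | X_{\ i} = x_{\ i})`. -/
noncomputable def IsMN [Fintype ι] [Fintype V] [DecidableEq ι] [DecidableEq V]
    (P : (ι → V) → ℝ) (G : SimpleGraph ι) [DecidableRel G.Adj] : Prop :=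
  ∀ i : ι, ∀ x : ι → V,
    margin P (insert i (G.neighborFinset i)) x / margin P (G.neighborFinset i) x
      = P x / margin P (Finset.univ.erase i) x

/-- `P` is a partitioned Markov network w.r.t. `G` for the partition `(X1, X1ᶜ)`. -/
noncomputable def IsPMN [Fintype ι] [Fintype V] [DecidableEq ι] [DecidableEq V]
    (P : (ι → V) → ℝ) (G : SimpleGraph ι) [DecidableRel G.Adj] (X1 : Finset ι) : Prop :=
  (∀ i ∈ X1, ∀ x : ι → V,
      margin P (insert i ((X1 ∪ G.neighborFinset i).erase i)) x
          / margin P ((X1 ∪ G.neighborFinset i).erase i) x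
        = P x / margin P (Finset.univ.erase i) x) ∧
  (∀ i ∈ X1ᶜ, ∀ x : ι → V,
      margin P (insert i ((X1ᶜ ∪ G.neighborFinset i).erase i)) x
          / margin P ((X1ᶜ ∪ G.neighborFinset i).erase i) x
        = P x / margin P (Finset.univ.erase i) x)

section
variable [Fintype ι] [Fintype V] [DecidableEq ι] [DecidableEq V] {P : (ι → V) → ℝ}

lemma margin_pos (hpos : ∀ x, 0 < P x) (A : Finset ι) (x : ι → V) : 0 < margin P A x :=
  Finset.sum_pos (fun y _ => hpos y) ⟨x, by simp⟩

lemma margin_congr {A : Finset ι} {x y : ι → V} (h : ∀ j ∈ A, y j = x j) :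
    margin P A y = margin P A x := by
  unfold margin
  congr 1
  exact Finset.filter_congr fun z _ => forall₂_congr fun j hj => by rw [h j hj]

/-- Each `z` agreeing with `x` on `S` lies in the fibre of `y := T.piecewise x z`,
and these fibres are exactly the sets summed over in `margin P Tᶜ y`. -/
lemma sum_margin_compl {S T : Finset ι} (hST : Disjoint S T) (x : ι → V) :
    ∑ y ∈ univ.filter (fun y : ι → V => ∀ j ∈ T ∪ S, y j = x j), margin P Tᶜ y
      = margin P S x := by
  set agreeS := univ.filter (fun z : ι → V => ∀ j ∈ S, z j = x j)
  have hmaps : ∀ z ∈ agreeS,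
      T.piecewise x z ∈ univ.filter (fun y : ι → V => ∀ j ∈ T ∪ S, y j = x j) := by
    intro z hz
    simp only [agreeS, mem_filter, mem_univ, true_and] at hz ⊢
    intro j hj
    by_cases hjT : j ∈ T
    · exact T.piecewise_eq_of_mem _ _ hjT
    · rw [T.piecewise_eq_of_notMem _ _ hjT, hz j ((mem_union.mp hj).resolve_left hjT)]
  rw [margin, ← Finset.sum_fiberwise_of_maps_to hmaps P]
  refine Finset.sum_congr rfl fun y hy => ?_
  simp only [mem_filter, mem_univ, true_and] at hy
  unfold margin
  congr 1
  ext z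
  simp only [agreeS, mem_filter, mem_univ, true_and, mem_compl]
  constructor
  · intro hz
    refine ⟨fun j hjS => ?_, funext fun j => ?_⟩
    · rw [hz j (Finset.disjoint_left.mp hST hjS), hy j (mem_union_right _ hjS)]
    · by_cases hjT : j ∈ T
      · rw [T.piecewise_eq_of_mem _ _ hjT, hy j (mem_union_left _ hjT)]
      · rw [T.piecewise_eq_of_notMem _ _ hjT, hz j hjT]
  · rintro ⟨-, rfl⟩ j hjT
    exact (T.piecewise_eq_of_notMem _ _ hjT).symm

lemma sum_margin_erase {S : Finset ι} {i : ι} (hiS : i ∉ S) (x : ι → V) :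
    ∑ y ∈ univ.filter (fun y : ι → V => ∀ j ∈ insert i S, y j = x j), margin P (univ.erase i) y
      = margin P S x := by
  rw [← compl_singleton, insert_eq]
  exact sum_margin_compl (disjoint_singleton_right.mpr hiS) x

variable {G : SimpleGraph ι} [DecidableRel G.Adj]

lemma IsMN.cond_congr (hMN : IsMN P G) {i : ι} {x y : ι → V}
    (h : ∀ j ∈ insert i (G.neighborFinset i), y j = x j) :
    P y / margin P (univ.erase i) y = P x / margin P (univ.erase i) x := by
  rw [← hMN, ← hMN, margin_congr h,
    margin_congr fun j hj => h j (mem_insert_of_mem hj)]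

lemma IsMN.cond_eq_of_neighborFinset_subset (hpos : ∀ x, 0 < P x) (hMN : IsMN P G)
    {i : ι} {S : Finset ι} (hNS : G.neighborFinset i ⊆ S) (hiS : i ∉ S) (x : ι → V) :
    margin P (insert i S) x / margin P S x = P x / margin P (univ.erase i) x := by
  set c := P x / margin P (univ.erase i) x
  have hlocal : ∀ y ∈ univ.filter (fun y : ι → V => ∀ j ∈ insert i S, y j = x j),
      P y = c * margin P (univ.erase i) y := by
    intro y hy
    simp only [mem_filter, mem_univ, true_and] at hy
    rw [← div_eq_iff (margin_pos hpos _ y).ne']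
    exact hMN.cond_congr fun j hj => hy j (insert_subset_insert i hNS hj)
  have hsum : margin P (insert i S) x = c * margin P S x := by
    rw [margin, Finset.sum_congr rfl hlocal, ← Finset.mul_sum, sum_margin_erase hiS]
  rw [hsum, mul_div_cancel_right₀ _ (margin_pos hpos S x).ne']

lemma IsMN.cond_union_erase (hpos : ∀ x, 0 < P x) (hMN : IsMN P G)
    (A : Finset ι) (i : ι) (x : ι → V) :
    margin P (insert i ((A ∪ G.neighborFinset i).erase i)) x
        / margin P ((A ∪ G.neighborFinset i).erase i) x
      = P x / margin P (univ.erase i) x := by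
  refine hMN.cond_eq_of_neighborFinset_subset hpos (fun j hj => ?_) (notMem_erase i _) x
  exact mem_erase.mpr ⟨(G.ne_of_adj ((G.mem_neighborFinset i j).mp hj)).symm,
    mem_union_right _ hj⟩

end

theorem mn_is_pmn_general [Fintype ι] [Fintype V] [DecidableEq ι] [DecidableEq V]
    (P : (ι → V) → ℝ) (hpos : ∀ x, 0 < P x)
    (G : SimpleGraph ι) [DecidableRel G.Adj]
    (hMN : IsMN P G)
    (X1 : Finset ι) :
    IsPMN P G X1 :=
  ⟨fun i _ x => hMN.cond_union_erase hpos X1 i x, fun i _ x => hMN.cond_union_erase hpos X1ᶜ i x⟩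

/-- If a strictly positive joint distribution `P` is a Markov network w.r.t. `G`,
then for any partition `(X1, X1ᶜ)` into two nonempty groups, `P` is a partitioned
Markov network w.r.t. `G`. -/
theorem mn_is_pmn [Fintype ι] [Fintype V] [DecidableEq ι] [DecidableEq V]
    (P : (ι → V) → ℝ) (hpos : ∀ x, 0 < P x) (hsum : ∑ x : ι → V, P x = 1)
    (G : SimpleGraph ι) [DecidableRel G.Adj]
    (hMN : IsMN P G)
    (X1 : Finset ι) (h1 : X1.Nonempty) (h2 : X1ᶜ.Nonempty) :
    IsPMN P G X1 :=
  mn_is_pmn_general P hpos G hMN X1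
end

section
/- Let P be a strictly positive joint distribution over finitely many finite-valued random variables X = (X1, X2), and suppose P is a Partitioned Markov Network with respect to a graph G. If X_u ∈ X1 and X_v ∈ X2 with v ∉ N(u) (u and v are not adjacent in G), then X_u and X_v are conditionally independent given all remaining variables: X_u ⫫ X_v | X \ {X_u, X_v}. -/
open Finset

variable {ι V : Type*}

/-!
If `P(x_u | x_{-u})` does not change when `x_v` alone is changed, then
`P(x) = c · P(x_{-u})` with a factor `c` that is constant along the fibre of `x_{-v}`;
summing over `x_v` gives `P(x_{-v}) = c · P(x_{-u,v})`, which is the factorisation.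
In a PMN, `P(x_u | x_{-u}) = P(x_u | x_S)` with `S = (X1 ∪ N(u)) \ {u}`, and `v ∉ S ∪ {u}`
when `v ∈ X2` is not a neighbour of `u`.
-/

namespace margin

variable [Fintype ι] [Fintype V] [DecidableEq ι] [DecidableEq V] (P : (ι → V) → ℝ)

lemma congr (A : Finset ι) {x y : ι → V} (h : ∀ i ∈ A, x i = y i) :
    margin P A x = margin P A y := by
  unfold margin
  congr 1
  ext z
  simp only [mem_filter, mem_univ, true_and]
  exact ⟨fun hz i hi => (hz i hi).trans (h i hi), fun hz i hi => (hz i hi).trans (h i hi).symm⟩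

lemma update_of_notMem {A : Finset ι} {v : ι} (hv : v ∉ A) (x : ι → V) (w : V) :
    margin P A (Function.update x v w) = margin P A x :=
  congr P A fun _ hi => Function.update_of_ne (ne_of_mem_of_not_mem hi hv) w x

lemma pos (hpos : ∀ x, 0 < P x) (A : Finset ι) (x : ι → V) : 0 < margin P A x :=
  sum_pos (fun y _ => hpos y) ⟨x, by simp⟩

lemma univ_eq (x : ι → V) : margin P univ x = P x := by
  rw [margin, filter_congr (q := (· = x)) fun y _ => by simp [funext_iff]]
  simp [filter_eq']

lemma erase_eq_sum {A : Finset ι} {v : ι} (hv : v ∈ A) (x : ι → V) :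
    margin P (A.erase v) x = ∑ w : V, margin P A (Function.update x v w) := by
  unfold margin
  rw [← sum_fiberwise_of_maps_to (g := fun y : ι → V => y v) (t := univ)
    fun _ _ => mem_univ _]
  refine sum_congr rfl fun w _ => ?_
  congr 1
  ext z
  simp only [mem_filter, mem_univ, true_and, mem_erase, Function.update]
  constructor
  · rintro ⟨hz, rfl⟩ i hi
    by_cases hiv : i = v
    · subst hiv; simp
    · simpa [hiv] using hz i ⟨hiv, hi⟩
  · intro hz
    exact ⟨fun i hi => by simpa [hi.1] using hz i hi.2, by simpa using hz v hv⟩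

end margin

section

variable [Fintype ι] [Fintype V] [DecidableEq ι] [DecidableEq V] {P : (ι → V) → ℝ}

theorem condIndep_of_condProb_update_eq (hpos : ∀ x, 0 < P x) {u v : ι} (huv : u ≠ v)
    (hcond : ∀ x w,
      P (Function.update x v w) / margin P (univ.erase u) (Function.update x v w)
        = P x / margin P (univ.erase u) x) (x : ι → V) :
    P x / margin P ((univ.erase u).erase v) x
      = (margin P (univ.erase v) x / margin P ((univ.erase u).erase v) x)
        * (margin P (univ.erase u) x / margin P ((univ.erase u).erase v) x) := by
  have hfibre : ∀ w, P (Function.update x v w)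
      = P x / margin P (univ.erase u) x * margin P (univ.erase u) (Function.update x v w) :=
    fun w => by rw [← hcond x w, div_mul_cancel₀ _ (margin.pos P hpos _ _).ne']
  have hmarg_v : margin P (univ.erase v) x
      = P x / margin P (univ.erase u) x * margin P ((univ.erase u).erase v) x := by
    rw [margin.erase_eq_sum P (mem_univ v),
      margin.erase_eq_sum P (mem_erase.2 ⟨huv.symm, mem_univ v⟩), mul_sum]
    exact sum_congr rfl fun w _ => by rw [margin.univ_eq, hfibre]
  have := (margin.pos P hpos ((univ.erase u).erase v) x).ne'
  have := (margin.pos P hpos (univ.erase u) x).ne'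
  rw [hmarg_v]
  field_simp

end

theorem pmn_pairwise_condIndep_general [Fintype ι] [Fintype V] [DecidableEq ι] [DecidableEq V]
    (P : (ι → V) → ℝ) (hpos : ∀ x, 0 < P x)
    (G : SimpleGraph ι) [DecidableRel G.Adj]
    (X1 : Finset ι) (hPMN : IsPMN P G X1)
    (u v : ι) (hu : u ∈ X1) (hv : v ∈ X1ᶜ) (hnadj : ¬ G.Adj u v) :
    ∀ x : ι → V,
      P x / margin P ((Finset.univ.erase u).erase v) x
        = (margin P (Finset.univ.erase v) x / margin P ((Finset.univ.erase u).erase v) x)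
          * (margin P (Finset.univ.erase u) x / margin P ((Finset.univ.erase u).erase v) x) := by
  have hvX1 : v ∉ X1 := mem_compl.1 hv
  have huv : u ≠ v := ne_of_mem_of_not_mem hu hvX1
  set S := (X1 ∪ G.neighborFinset u).erase u
  have hvS : v ∉ S := by simp [S, hvX1, hnadj]
  have hvuS : v ∉ insert u S := by simp [huv.symm, hvS]
  refine condIndep_of_condProb_update_eq hpos huv fun x w => ?_
  rw [← hPMN.1 u hu, ← hPMN.1 u hu, margin.update_of_notMem P hvuS,
    margin.update_of_notMem P hvS]

/-- If a strictly positive `P` is a PMN w.r.t. `G`, `u ∈ X1`, `v ∈ X2 = X1ᶜ` and `u,v`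
are not adjacent in `G`, then `X_u ⫫ X_v` given all the remaining variables:
`P(X_u, X_v | rest) = P(X_u | rest) · P(X_v | rest)` for every configuration. -/
theorem pmn_pairwise_condIndep [Fintype ι] [Fintype V] [DecidableEq ι] [DecidableEq V]
    (P : (ι → V) → ℝ) (hpos : ∀ x, 0 < P x) (hsum : ∑ x : ι → V, P x = 1)
    (G : SimpleGraph ι) [DecidableRel G.Adj]
    (X1 : Finset ι) (hPMN : IsPMN P G X1)
    (u v : ι) (hu : u ∈ X1) (hv : v ∈ X1ᶜ) (hnadj : ¬ G.Adj u v) :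
    ∀ x : ι → V,
      P x / margin P ((Finset.univ.erase u).erase v) x
        = (margin P (Finset.univ.erase v) x / margin P ((Finset.univ.erase u).erase v) x)
          * (margin P (Finset.univ.erase u) x / margin P ((Finset.univ.erase u).erase v) x) :=
  pmn_pairwise_condIndep_general P hpos G X1 hPMN u v hu hv hnadj
end
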